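/- Let A be a bounded operator on a Hilbert space H = ℓ²(ℕ), let Q_m = I - P_m where P_m is the projection onto the first m basis vectors, and define μ_m(0) = min{σ₁(AQ_m), σ₁(A*Q_m)} with σ₁ the injection modulus restricted to Ran Q_m. Then the limit μ(0) = lim_{m→∞} μ_m(0) exists (the sequence is nondecreasing and bounded) and equals ‖(A + K(H))⁻¹‖⁻¹, the reciprocal of the norm of the inverse of the coset of A in the Calkin algebra B(H)/K(H), with the convention that this is 0 if A + K(H) is not invertible (i.e., A is not Fredholm). -/

import Mathlib

open Filter Topology

noncomputable section

/-- `ℓ²(ℕ)` over `ℂ`. -/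
abbrev L2 : Type := lp (fun _ : ℕ => ℂ) 2

/-- The canonical orthonormal basis vectors of `ℓ²(ℕ)`. -/
def eVec (i : ℕ) : L2 := lp.single 2 i 1

/-- `Ran P_m`: the span of the first `m` canonical basis vectors; its orthogonal
complement `(spanE m)ᗮ` is `Ran Q_m` for `Q_m = I - P_m`. -/
def spanE (m : ℕ) : Submodule ℂ L2 := Submodule.span ℂ (eVec '' Set.Iio m)

/-- The injection modulus of `B` restricted to the subspace `E`. -/
def sigma1On (B : L2 →L[ℂ] L2) (E : Submodule ℂ L2) : ℝ :=
  sInf {r : ℝ | ∃ ξ ∈ E, ‖ξ‖ = 1 ∧ r = ‖B ξ‖}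

/-- `μ_m(0) = min{σ₁(A Q_m), σ₁(A* Q_m)}` with `σ₁` restricted to `Ran Q_m = (Ran P_m)ᗮ`. -/
def muM (A : L2 →L[ℂ] L2) (m : ℕ) : ℝ :=
  min (sigma1On A (spanE m)ᗮ) (sigma1On (ContinuousLinearMap.adjoint A) (spanE m)ᗮ)

/-- The set of compact operators `K(H)` on `ℓ²(ℕ)`. -/
def compacts : Set (L2 →L[ℂ] L2) := {T : L2 →L[ℂ] L2 | IsCompactOperator ⇑T}

/-!
Since `Q_m → 0` strongly, `‖K Q_m‖ → 0` and `‖K⋆ Q_m‖ → 0` for every compact `K` (uniform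
convergence on the totally bounded image of the unit ball, and the C⋆-identity for `K Q_m`).
For a regularizer `B` of `A`, the identity `ξ = B A ξ - (B A - 1) ξ` and its adjoint give
`1 - o(1) ≤ ‖B‖ μ_m(0)`; applied to every `B - K` with `K` compact, this bounds the limit below
by `dist(B, K(H))⁻¹`.

Conversely, if `c = μ_m(0) > 0`, then `A` maps `Ran Q_m` isomorphically onto a closed subspace
`R`, and `Rᗮ` is finite-dimensional because `A⋆` is injective on `Ran Q_m`. Inverting `A` on `R`
after projecting onto `R` gives a regularizer of norm at most `1 / c`; it differs from `B` by a
compact operator, so `dist(B, K(H)) ≤ 1 / μ_m(0)`. If `A` has no regularizer, the same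
construction forces `μ_m(0) = 0`.
-/

section CompactOperator

variable {𝕜 E F G : Type*} [RCLike 𝕜]
  [NormedAddCommGroup E] [NormedSpace 𝕜 E] [NormedAddCommGroup F] [NormedSpace 𝕜 F]
  [NormedAddCommGroup G] [NormedSpace 𝕜 G]

theorem IsCompactOperator.clm_mul {K : E →L[𝕜] E} (hK : IsCompactOperator K) (T : E →L[𝕜] E) :
    IsCompactOperator (T * K) :=
  hK.clm_comp T

theorem IsCompactOperator.mul_clm {K : E →L[𝕜] E} (hK : IsCompactOperator K) (T : E →L[𝕜] E) :
    IsCompactOperator (K * T) :=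
  hK.comp_clm T

theorem isCompactOperator_of_forall_mem {N : Submodule 𝕜 F} [FiniteDimensional 𝕜 N]
    (T : E →L[𝕜] F) (hT : ∀ x, T x ∈ N) : IsCompactOperator T :=
  (isCompactOperator_of_locallyCompactSpace_dom (T.codRestrict N hT)).clm_comp N.subtypeL

theorem IsCompactOperator.tendsto_comp_of_tendsto_apply {ι : Type*} {l : Filter ι}
    {T : E →L[𝕜] F} (hT : IsCompactOperator T) {P : ι → F →L[𝕜] G} {C : ℝ}
    (hPC : ∀ i, ‖P i‖ ≤ C) (hP : ∀ y, Tendsto (fun i => P i y) l (𝓝 0)) :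
    Tendsto (fun i => (P i).comp T) l (𝓝 0) := by
  rw [Metric.tendsto_nhds]
  intro ε hε
  have hε4 : 0 < ε / 4 := by positivity
  obtain ⟨δ, hδ, hCδ⟩ := exists_pos_mul_lt hε4 C
  obtain ⟨t, ht, hcover⟩ := Metric.totallyBounded_iff.1
    (hT.isCompact_closure_image_closedBall 1).totallyBounded δ hδ
  have hsmall : ∀ᶠ i in l, ∀ y ∈ t, ‖P i y‖ < ε / 4 :=
    (eventually_all_finite ht).2 fun y _ =>
      (hP y).norm.eventually (gt_mem_nhds (by rwa [norm_zero]))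
  filter_upwards [hsmall] with i hi
  rw [dist_zero_right]
  refine lt_of_le_of_lt (ContinuousLinearMap.opNorm_le_of_unit_norm (by positivity)
    fun x hx => ?_) (half_lt_self hε)
  obtain ⟨y, hyt, hxy⟩ := Set.mem_iUnion₂.1 (hcover (subset_closure ⟨x, by simp [hx], rfl⟩))
  have hTxy : ‖P i (T x - y)‖ ≤ C * δ :=
    ((P i).le_opNorm _).trans (mul_le_mul (hPC i) (mem_ball_iff_norm.1 hxy).le
      (norm_nonneg _) ((norm_nonneg _).trans (hPC i)))
  calc ‖(P i).comp T x‖ = ‖P i (T x - y) + P i y‖ := by simp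
    _ ≤ ‖P i (T x - y)‖ + ‖P i y‖ := norm_add_le _ _
    _ ≤ ε / 2 := by linarith [hi y hyt]

theorem norm_le_norm_mul_norm_apply_add (A B : E →L[𝕜] E) (x : E) :
    ‖x‖ ≤ ‖B‖ * ‖A x‖ + ‖(B * A - 1) x‖ :=
  calc ‖x‖ = ‖B (A x) - (B * A - 1) x‖ := by simp
    _ ≤ ‖B (A x)‖ + ‖(B * A - 1) x‖ := norm_sub_le _ _
    _ ≤ ‖B‖ * ‖A x‖ + ‖(B * A - 1) x‖ := by gcongr; exact B.le_opNorm _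

/-- `B` is a regularizer of `A` when `B + K(E)` inverts `A + K(E)` in the Calkin algebra. -/
def IsRegularizer (A B : E →L[𝕜] E) : Prop :=
  IsCompactOperator ⇑(B * A - 1) ∧ IsCompactOperator ⇑(A * B - 1)

theorem IsRegularizer.sub {A B K : E →L[𝕜] E} (hB : IsRegularizer A B)
    (hK : IsCompactOperator K) : IsRegularizer A (B - K) := by
  constructor
  · rw [show (B - K) * A - 1 = (B * A - 1) - K * A by noncomm_ring]
    exact hB.1.sub (hK.mul_clm A)
  · rw [show A * (B - K) - 1 = (A * B - 1) - A * K by noncomm_ring]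
    exact hB.2.sub (hK.clm_mul A)

theorem IsRegularizer.isCompactOperator_sub {A B B' : E →L[𝕜] E} (hB : IsRegularizer A B)
    (hB' : IsRegularizer A B') : IsCompactOperator (B - B') := by
  rw [show B - B' = (B * A - 1) * B' - B * (A * B' - 1) by noncomm_ring]
  exact (hB.1.mul_clm B').sub (hB'.2.clm_mul B)

end CompactOperator

section Hilbert

variable {𝕜 H : Type*} [RCLike 𝕜] [NormedAddCommGroup H] [InnerProductSpace 𝕜 H]

theorem isCompactOperator_of_forall_orthogonal_eq_zero {U : Submodule 𝕜 H}
    [FiniteDimensional 𝕜 U] (T : H →L[𝕜] H) (hT : ∀ ξ ∈ Uᗮ, T ξ = 0) : IsCompactOperator T := by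
  refine isCompactOperator_of_forall_mem (N := U.map (T : H →ₗ[𝕜] H)) T fun x => ?_
  have hx : T x = T (U.starProjection x) := by
    rw [← sub_eq_zero, ← map_sub, hT _ (U.sub_starProjection_mem_orthogonal x)]
  exact hx ▸ Submodule.mem_map_of_mem (U.starProjection_apply_mem x)

theorem norm_apply_le_of_norm_mul_starProjection_le {K : Submodule 𝕜 H}
    [K.HasOrthogonalProjection] {S : H →L[𝕜] H} {ε : ℝ} (hS : ‖S * K.starProjection‖ ≤ ε)
    {ξ : H} (hξ : ξ ∈ K) : ‖S ξ‖ ≤ ε * ‖ξ‖ := by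
  calc ‖S ξ‖ = ‖(S * K.starProjection) ξ‖ :=
        congrArg (‖S ·‖) (K.starProjection_eq_self_iff.2 hξ).symm
    _ ≤ ε * ‖ξ‖ := (S * K.starProjection).le_of_opNorm_le hS ξ

variable [CompleteSpace H]

theorem IsCompactOperator.tendsto_mul_starProjection {ι : Type*} {l : Filter ι}
    {T : H →L[𝕜] H} (hT : IsCompactOperator T) {K : ι → Submodule 𝕜 H}
    [∀ i, (K i).HasOrthogonalProjection]
    (hK : ∀ y, Tendsto (fun i => (K i).starProjection y) l (𝓝 0)) :
    Tendsto (fun i => T * (K i).starProjection) l (𝓝 0) := by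
  have hTT : IsCompactOperator (T.adjoint.comp T) := hT.clm_comp T.adjoint
  have hlim := hTT.tendsto_comp_of_tendsto_apply (fun i => (K i).starProjection_norm_le) hK
  -- the C⋆-identity turns `‖T Q‖²` into `‖Q T⋆T Q‖ ≤ ‖Q T⋆T‖`
  have hbound : ∀ i, ‖T * (K i).starProjection‖ ≤
      √‖(K i).starProjection.comp (T.adjoint.comp T)‖ := by
    intro i
    set Q := (K i).starProjection
    refine Real.le_sqrt_of_sq_le ?_
    calc ‖T * Q‖ ^ 2 = ‖star (T * Q) * (T * Q)‖ := by
          rw [sq]; exact CStarRing.norm_star_mul_self.symm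
      _ = ‖Q.comp (T.adjoint.comp T) * Q‖ := by
        rw [star_mul, (isSelfAdjoint_starProjection (K i)).star_eq,
          ContinuousLinearMap.star_eq_adjoint]
        rfl
      _ ≤ ‖Q.comp (T.adjoint.comp T)‖ * ‖Q‖ := norm_mul_le _ _
      _ ≤ ‖Q.comp (T.adjoint.comp T)‖ :=
        mul_le_of_le_one_right (norm_nonneg _) (K i).starProjection_norm_le
  refine squeeze_zero_norm hbound ?_
  have := (Real.continuous_sqrt.tendsto 0).comp (tendsto_norm_zero.comp hlim)
  rwa [Real.sqrt_zero] at this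

theorem IsCompactOperator.tendsto_adjoint_mul_starProjection {ι : Type*} {l : Filter ι}
    {T : H →L[𝕜] H} (hT : IsCompactOperator T) {K : ι → Submodule 𝕜 H}
    [∀ i, (K i).HasOrthogonalProjection]
    (hK : ∀ y, Tendsto (fun i => (K i).starProjection y) l (𝓝 0)) :
    Tendsto (fun i => T.adjoint * (K i).starProjection) l (𝓝 0) := by
  have hlim := hT.tendsto_comp_of_tendsto_apply (fun i => (K i).starProjection_norm_le) hK
  refine tendsto_zero_iff_norm_tendsto_zero.2 ?_
  convert tendsto_zero_iff_norm_tendsto_zero.1 hlim using 2 with i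
  have hstar : T.adjoint * (K i).starProjection = star ((K i).starProjection * T) := by
    rw [star_mul, (isSelfAdjoint_starProjection (K i)).star_eq,
      ContinuousLinearMap.star_eq_adjoint]
  rw [hstar]
  exact norm_star ((K i).starProjection * T)

theorem exists_inverse_on_of_lower_bound {M : Submodule 𝕜 H} [CompleteSpace M] {A : H →L[𝕜] H}
    {c : ℝ} (hc : 0 < c) (hA : ∀ ξ ∈ M, c * ‖ξ‖ ≤ ‖A ξ‖) :
    ∃ B : H →L[𝕜] H, ‖B‖ ≤ c⁻¹ ∧ (∀ ξ ∈ M, B (A ξ) = ξ) ∧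
      ∀ x, A (B x) - x ∈ (M.map (A : H →ₗ[𝕜] H))ᗮ := by
  set T := A.comp M.subtypeL
  have hT : ∀ ξ : M, ‖ξ‖ ≤ c⁻¹ * ‖T ξ‖ := fun ξ => by
    rw [inv_mul_eq_div, le_div_iff₀' hc]; exact hA ξ ξ.2
  have hanti := T.antilipschitz_of_bound (K := ⟨c⁻¹, by positivity⟩) hT
  let e := T.equivRange hanti.injective (hanti.isClosed_range T.uniformContinuous)
  have hR : T.range = M.map (A : H →ₗ[𝕜] H) := by
    ext y; simp [T]
  have : CompleteSpace T.range := (hanti.isClosed_range T.uniformContinuous).completeSpace_coe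
  set P := T.range.orthogonalProjectionOnto
  have hTE : ∀ y, T (e.symm y) = y := fun y => congrArg Subtype.val (e.apply_symm_apply y)
  refine ⟨M.subtypeL.comp (e.symm.toContinuousLinearMap.comp P), ?_, fun ξ hξ => ?_, fun x => ?_⟩
  · refine ContinuousLinearMap.opNorm_le_bound _ (by positivity) fun x => ?_
    calc ‖e.symm (P x)‖ ≤ c⁻¹ * ‖T (e.symm (P x))‖ := hT _
      _ = c⁻¹ * ‖P x‖ := by rw [hTE]; rfl
      _ ≤ c⁻¹ * ‖x‖ := by
        gcongr
        exact (P.le_opNorm x).trans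
          (mul_le_of_le_one_left (norm_nonneg _) T.range.orthogonalProjectionOnto_norm_le)
  · have hP : P (T ⟨ξ, hξ⟩) = e ⟨ξ, hξ⟩ :=
      T.range.orthogonalProjectionOnto_mem_subspace_eq_self (e ⟨ξ, hξ⟩)
    change ((e.symm (P (T ⟨ξ, hξ⟩)) : M) : H) = ξ
    rw [hP, e.symm_apply_apply]
  · have hAB : A (M.subtypeL.comp (e.symm.toContinuousLinearMap.comp P) x) = P x := hTE (P x)
    rw [hAB, ← hR, ← neg_sub]
    exact neg_mem (T.range.sub_starProjection_mem_orthogonal x)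

theorem finiteDimensional_orthogonal_map_orthogonal {U : Submodule 𝕜 H}
    [FiniteDimensional 𝕜 U] {A : H →L[𝕜] H} (hA : ∀ ξ ∈ Uᗮ, A.adjoint ξ = 0 → ξ = 0) :
    FiniteDimensional 𝕜 (Uᗮ.map (A : H →ₗ[𝕜] H))ᗮ := by
  set N := (Uᗮ.map (A : H →ₗ[𝕜] H))ᗮ
  have hN : ∀ η : N, A.adjoint η ∈ U := fun η => by
    rw [← U.orthogonal_orthogonal, Submodule.mem_orthogonal]
    intro u hu
    rw [ContinuousLinearMap.adjoint_inner_right]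
    exact (Submodule.mem_orthogonal _ _).1 η.2 _ (Submodule.mem_map_of_mem hu)
  let φ : N →ₗ[𝕜] U × U := LinearMap.prod
    ((U.orthogonalProjectionOnto : H →ₗ[𝕜] U).comp N.subtype)
    (LinearMap.codRestrict U ((A.adjoint : H →ₗ[𝕜] H).comp N.subtype) hN)
  refine FiniteDimensional.of_injective φ (LinearMap.ker_eq_bot.1 (LinearMap.ker_eq_bot'.2 ?_))
  intro η hη
  have hU : (η : H) ∈ Uᗮ := Submodule.orthogonalProjectionOnto_eq_zero_iff.1 (congrArg Prod.fst hη)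
  exact Subtype.ext (hA η hU (congrArg (fun p => (p.2 : H)) hη))

theorem exists_isRegularizer_of_lower_bound_on_orthogonal {U : Submodule 𝕜 H}
    [FiniteDimensional 𝕜 U] {A : H →L[𝕜] H} {c : ℝ} (hc : 0 < c)
    (hA : ∀ ξ ∈ Uᗮ, c * ‖ξ‖ ≤ ‖A ξ‖) (hA' : ∀ ξ ∈ Uᗮ, c * ‖ξ‖ ≤ ‖A.adjoint ξ‖) :
    ∃ B : H →L[𝕜] H, ‖B‖ ≤ c⁻¹ ∧ IsRegularizer A B := by
  obtain ⟨B, hB, hBA, hAB⟩ := exists_inverse_on_of_lower_bound hc hA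
  have := finiteDimensional_orthogonal_map_orthogonal (A := A) fun ξ hξ h0 =>
    norm_le_zero_iff.1 (le_of_mul_le_mul_left (by simpa [h0] using hA' ξ hξ) hc)
  refine ⟨B, hB, isCompactOperator_of_forall_orthogonal_eq_zero (U := U) _ fun ξ hξ => ?_,
    isCompactOperator_of_forall_mem _ hAB⟩
  simp [hBA ξ hξ]

end Hilbert

instance (m : ℕ) : FiniteDimensional ℂ (spanE m) :=
  FiniteDimensional.span_of_finite ℂ ((Set.finite_Iio m).image eVec)

theorem coe_default_hilbertBasis : ⇑(default : HilbertBasis ℕ ℂ L2) = eVec := by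
  funext i
  rw [eVec, ← HilbertBasis.repr_symm_single]
  rfl

theorem norm_eVec (i : ℕ) : ‖eVec i‖ = 1 := by
  rw [← coe_default_hilbertBasis]
  exact (default : HilbertBasis ℕ ℂ L2).orthonormal.1 i

theorem spanE_mono : Monotone spanE := fun _ _ h =>
  Submodule.span_mono (Set.image_mono (Set.Iio_subset_Iio h))

theorem eVec_mem_orthogonal_spanE (m : ℕ) : eVec m ∈ (spanE m)ᗮ := by
  have h : Submodule.span ℂ {eVec m} ⟂ spanE m := by
    refine Submodule.isOrtho_span.2 ?_
    rintro _ rfl _ ⟨j, hj, rfl⟩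
    rw [← coe_default_hilbertBasis]
    exact (default : HilbertBasis ℕ ℂ L2).orthonormal.2 (ne_of_lt hj).symm
  exact h (Submodule.mem_span_singleton_self _)

theorem exists_norm_eq_one_mem_orthogonal_spanE (m : ℕ) : ∃ ξ ∈ (spanE m)ᗮ, ‖ξ‖ = 1 :=
  ⟨eVec m, eVec_mem_orthogonal_spanE m, norm_eVec m⟩

theorem tendsto_starProjection_orthogonal_spanE (y : L2) :
    Tendsto (fun m => (spanE m)ᗮ.starProjection y) atTop (𝓝 0) := by
  have hdense : ⊤ ≤ (⨆ m, spanE m).topologicalClosure := by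
    simp only [spanE]
    rw [← Submodule.span_iUnion, ← Set.image_iUnion, Set.iUnion_Iio, Set.image_univ,
      ← coe_default_hilbertBasis, HilbertBasis.dense_span]
  simpa using (tendsto_const_nhds (x := y)).sub
    (Submodule.starProjection_tendsto_self spanE spanE_mono y hdense)

theorem sigma1On_le {B : L2 →L[ℂ] L2} {E : Submodule ℂ L2} {ξ : L2} (hξ : ξ ∈ E)
    (h1 : ‖ξ‖ = 1) : sigma1On B E ≤ ‖B ξ‖ :=
  csInf_le ⟨0, by rintro _ ⟨_, -, -, rfl⟩; exact norm_nonneg _⟩ ⟨ξ, hξ, h1, rfl⟩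

theorem sigma1On_nonneg (B : L2 →L[ℂ] L2) (E : Submodule ℂ L2) : 0 ≤ sigma1On B E :=
  Real.sInf_nonneg (by rintro _ ⟨_, -, -, rfl⟩; exact norm_nonneg _)

theorem sigma1On_mul_norm_le {B : L2 →L[ℂ] L2} {E : Submodule ℂ L2} {ξ : L2} (hξ : ξ ∈ E) :
    sigma1On B E * ‖ξ‖ ≤ ‖B ξ‖ := by
  rcases eq_or_ne ξ 0 with rfl | hne
  · simp
  have hpos : 0 < ‖ξ‖ := norm_pos_iff.2 hne
  have h := sigma1On_le (B := B) (E.smul_mem (‖ξ‖⁻¹ : ℂ) hξ) (by simp [norm_smul, hne])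
  rw [map_smul, norm_smul, norm_inv, Complex.norm_real, Real.norm_of_nonneg hpos.le,
    le_inv_mul_iff₀ hpos] at h
  linarith

theorem le_mul_sigma1On {B : L2 →L[ℂ] L2} {E : Submodule ℂ L2} (hE : ∃ ξ ∈ E, ‖ξ‖ = 1)
    {a c : ℝ} (ha : 0 ≤ a) (h : ∀ ξ ∈ E, c * ‖ξ‖ ≤ a * ‖B ξ‖) : c ≤ a * sigma1On B E := by
  rw [sigma1On, ← smul_eq_mul, ← Real.sInf_smul_of_nonneg ha]
  obtain ⟨ξ₀, hξ₀, h₀⟩ := hE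
  refine le_csInf ⟨_, ⟨_, ⟨ξ₀, hξ₀, h₀, rfl⟩, rfl⟩⟩ ?_
  rintro _ ⟨_, ⟨ξ, hξ, h1, rfl⟩, rfl⟩
  simpa [h1] using h ξ hξ

theorem muM_nonneg (A : L2 →L[ℂ] L2) (m : ℕ) : 0 ≤ muM A m :=
  le_min (sigma1On_nonneg _ _) (sigma1On_nonneg _ _)

theorem monotone_sigma1On_orthogonal_spanE (B : L2 →L[ℂ] L2) :
    Monotone fun m => sigma1On B (spanE m)ᗮ := fun m n h => by
  have hle : ∀ ξ ∈ (spanE n)ᗮ, sigma1On B (spanE m)ᗮ * ‖ξ‖ ≤ 1 * ‖B ξ‖ := fun ξ hξ => by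
    rw [one_mul]
    exact sigma1On_mul_norm_le (Submodule.orthogonal_le (spanE_mono h) hξ)
  simpa using le_mul_sigma1On (exists_norm_eq_one_mem_orthogonal_spanE n) zero_le_one hle

theorem muM_mono (A : L2 →L[ℂ] L2) : Monotone (muM A) := fun _ _ h =>
  min_le_min (monotone_sigma1On_orthogonal_spanE A h) (monotone_sigma1On_orthogonal_spanE _ h)

theorem muM_le_norm (A : L2 →L[ℂ] L2) (m : ℕ) : muM A m ≤ ‖A‖ :=
  calc muM A m ≤ ‖A (eVec m)‖ :=
        (min_le_left _ _).trans (sigma1On_le (eVec_mem_orthogonal_spanE m) (norm_eVec m))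
    _ ≤ ‖A‖ := by simpa [norm_eVec] using A.le_opNorm (eVec m)

theorem exists_isRegularizer_of_muM_pos {A : L2 →L[ℂ] L2} {m : ℕ} (h : 0 < muM A m) :
    ∃ B : L2 →L[ℂ] L2, ‖B‖ ≤ (muM A m)⁻¹ ∧ IsRegularizer A B :=
  exists_isRegularizer_of_lower_bound_on_orthogonal (U := spanE m) h
    (fun _ hξ => (mul_le_mul_of_nonneg_right (min_le_left _ _) (norm_nonneg _)).trans
      (sigma1On_mul_norm_le hξ))
    (fun _ hξ => (mul_le_mul_of_nonneg_right (min_le_right _ _) (norm_nonneg _)).trans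
      (sigma1On_mul_norm_le hξ))

theorem IsRegularizer.infDist_mul_muM_le_one {A B : L2 →L[ℂ] L2} (hB : IsRegularizer A B)
    (m : ℕ) : Metric.infDist B compacts * muM A m ≤ 1 := by
  rcases (muM_nonneg A m).eq_or_lt with h | h
  · rw [← h, mul_zero]
    exact zero_le_one
  obtain ⟨B₀, hB₀, hreg⟩ := exists_isRegularizer_of_muM_pos h
  have hd : Metric.infDist B compacts ≤ ‖B₀‖ := by
    have := Metric.infDist_le_dist_of_mem (x := B) (s := compacts)
      (hB.isCompactOperator_sub hreg)
    rwa [dist_eq_norm, sub_sub_cancel] at this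
  calc Metric.infDist B compacts * muM A m ≤ (muM A m)⁻¹ * muM A m :=
        mul_le_mul_of_nonneg_right (hd.trans hB₀) h.le
    _ = 1 := inv_mul_cancel₀ h.ne'

theorem IsRegularizer.eventually_one_sub_le_norm_mul_muM {A B : L2 →L[ℂ] L2}
    (hB : IsRegularizer A B) {ε : ℝ} (hε : 0 < ε) :
    ∀ᶠ m in atTop, 1 - ε ≤ ‖B‖ * muM A m := by
  have hsmall {S : ℕ → L2 →L[ℂ] L2} (hS : Tendsto S atTop (𝓝 0)) : ∀ᶠ m in atTop, ‖S m‖ ≤ ε :=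
    hS.norm.eventually (ge_mem_nhds (by rwa [norm_zero]))
  filter_upwards [hsmall (hB.1.tendsto_mul_starProjection tendsto_starProjection_orthogonal_spanE),
    hsmall (hB.2.tendsto_adjoint_mul_starProjection tendsto_starProjection_orthogonal_spanE)]
    with m h₁ h₂
  rw [muM, mul_min_of_nonneg _ _ (norm_nonneg B)]
  have hunit := exists_norm_eq_one_mem_orthogonal_spanE m
  refine le_min (le_mul_sigma1On hunit (norm_nonneg B) fun ξ hξ => ?_)
    (le_mul_sigma1On hunit (norm_nonneg B) fun ξ hξ => ?_)
  · linarith [norm_le_norm_mul_norm_apply_add A B ξ,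
      norm_apply_le_of_norm_mul_starProjection_le h₁ hξ]
  · have hadj : ContinuousLinearMap.adjoint B * ContinuousLinearMap.adjoint A - 1 =
        ContinuousLinearMap.adjoint (A * B - 1) := by
      simp only [← ContinuousLinearMap.star_eq_adjoint, star_sub, star_mul, star_one]
    have := norm_le_norm_mul_norm_apply_add (ContinuousLinearMap.adjoint A)
      (ContinuousLinearMap.adjoint B) ξ
    rw [hadj, LinearIsometryEquiv.norm_map] at this
    linarith [norm_apply_le_of_norm_mul_starProjection_le h₂ hξ]

theorem IsRegularizer.one_le_norm_mul {A B : L2 →L[ℂ] L2} (hB : IsRegularizer A B) {L : ℝ}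
    (hL : Tendsto (muM A) atTop (𝓝 L)) : 1 ≤ ‖B‖ * L :=
  le_of_forall_sub_le fun _ hε =>
    ge_of_tendsto (hL.const_mul ‖B‖) (hB.eventually_one_sub_le_norm_mul_muM hε)

/-- The sequence `μ_m(0) = min{σ₁(AQ_m), σ₁(A*Q_m)}` is nondecreasing and its
limit `μ(0)` equals `‖(A + K(H))⁻¹‖⁻¹`, the reciprocal of the norm of the inverse of the
coset of `A` in the Calkin algebra: if `B` is any regularizer of `A` (so `B + K(H)` is the
inverse coset and its norm is `dist(B, K(H))`), the limit is `(dist(B, K(H)))⁻¹`; if `A`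
is not Fredholm (no regularizer exists) the limit is `0`. -/
theorem stmt_9 (A : L2 →L[ℂ] L2) :
    Monotone (muM A) ∧
    (∀ B : L2 →L[ℂ] L2, IsCompactOperator ⇑(B * A - 1) → IsCompactOperator ⇑(A * B - 1) →
      Tendsto (muM A) atTop (𝓝 ((Metric.infDist B compacts)⁻¹))) ∧
    ((¬ ∃ B : L2 →L[ℂ] L2, IsCompactOperator ⇑(B * A - 1) ∧ IsCompactOperator ⇑(A * B - 1)) →
      Tendsto (muM A) atTop (𝓝 (0 : ℝ))) := by
  have hL := tendsto_atTop_ciSup (muM_mono A) ⟨‖A‖, Set.forall_mem_range.2 (muM_le_norm A)⟩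
  set L := ⨆ m, muM A m
  refine ⟨muM_mono A, fun B hB₁ hB₂ => ?_, fun hA => ?_⟩
  · have hB : IsRegularizer A B := ⟨hB₁, hB₂⟩
    have hlow (K) (hK : K ∈ compacts) : 1 ≤ ‖B - K‖ * L := (hB.sub hK).one_le_norm_mul hL
    have hL₀ : 0 < L := by
      have := hlow 0 isCompactOperator_zero
      rw [sub_zero] at this
      exact pos_of_mul_pos_right (one_pos.trans_le this) (norm_nonneg B)
    have hdist : L⁻¹ ≤ Metric.infDist B compacts :=
      (Metric.le_infDist ⟨0, isCompactOperator_zero⟩).2 fun K hK => by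
        rw [dist_eq_norm, inv_le_iff_one_le_mul₀ hL₀]
        exact hlow K hK
    have hmul : Metric.infDist B compacts * L ≤ 1 :=
      le_of_tendsto' (hL.const_mul _) hB.infDist_mul_muM_le_one
    have hdist' : Metric.infDist B compacts ≤ L⁻¹ := by
      rwa [← one_div, le_div_iff₀ hL₀]
    rwa [le_antisymm hdist' hdist, inv_inv]
  · have hzero (m : ℕ) : muM A m = 0 :=
      (muM_nonneg A m).antisymm' <| not_lt.1 fun h =>
        let ⟨B, _, hB⟩ := exists_isRegularizer_of_muM_pos h
        hA ⟨B, hB⟩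
    rw [show muM A = fun _ => 0 from funext hzero]
    exact tendsto_const_nhds

end
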